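/- arXiv:1102.3138 — 5 statements merged into one kernel-verified Lean document; each statement's English description precedes it below -/
import Mathlib

section
/- Let (Z, ρ) be a complete CAT(1) metric space and let p, q ∈ Z with ρ(p,q) = π. Then the equator E(p,q) = {x ∈ Z | ρ(p,x) = ρ(x,q) = π/2} is closed and π-convex: for any a, b ∈ E(p,q) with ρ(a,b) < π, every point on the geodesic segment [a,b] lies in E(p,q). -/
open Set InnerProductGeometry

/-- `γ` is a unit-speed geodesic segment from `x` to `y`, parametrized on `[0, dist x y]`. -/
def IsGeodesicSegment {Z : Type*} [MetricSpace Z] (γ : ℝ → Z) (x y : Z) : Prop :=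
  γ 0 = x ∧ γ (dist x y) = y ∧
    ∀ s ∈ Set.Icc (0 : ℝ) (dist x y), ∀ t ∈ Set.Icc (0 : ℝ) (dist x y),
      dist (γ s) (γ t) = |s - t|

/-- A CAT(1) space: a metric space in which points at distance `< π` are joined by
geodesics, and every geodesic triangle of perimeter `< 2π` satisfies the comparison
inequality with respect to a comparison triangle on the unit sphere `S² ⊆ ℝ³` (spherical
distances being angles between unit vectors). -/
class CATOneSpace (Z : Type*) [MetricSpace Z] : Prop where
  exists_geodesic : ∀ x y : Z, dist x y < Real.pi → ∃ γ : ℝ → Z, IsGeodesicSegment γ x y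
  comparison : ∀ (x y z : Z) (γ : ℝ → Z), IsGeodesicSegment γ x y →
    dist x y + dist y z + dist z x < 2 * Real.pi →
    ∀ x' y' z' m' : EuclideanSpace ℝ (Fin 3),
      ‖x'‖ = 1 → ‖y'‖ = 1 → ‖z'‖ = 1 → ‖m'‖ = 1 →
      angle x' y' = dist x y → angle y' z' = dist y z → angle x' z' = dist x z →
      ∀ t ∈ Set.Icc (0 : ℝ) (dist x y),
        angle x' m' = t → angle m' y' = dist x y - t →
        dist z (γ t) ≤ angle z' m'

/-!
Comparison with a spherical triangle whose side `[a, b]` lies on the equator of `S²` and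
whose third vertex is the north pole shows that a point at distance `π/2` from both `a` and
`b` is at distance at most `π/2` from every point of `[a, b]`. Applied to `p` and `q`, the
triangle inequality `π = ρ(p, q) ≤ ρ(p, x) + ρ(x, q)` forces both distances to equal `π/2`.
-/

noncomputable def sphereEquatorPoint (θ : ℝ) : EuclideanSpace ℝ (Fin 3) :=
  !₂[Real.cos θ, Real.sin θ, 0]

noncomputable def sphereNorthPole : EuclideanSpace ℝ (Fin 3) :=
  !₂[0, 0, 1]

lemma norm_sphereEquatorPoint (θ : ℝ) : ‖sphereEquatorPoint θ‖ = 1 := by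
  simp [sphereEquatorPoint, EuclideanSpace.norm_eq, Fin.sum_univ_three, Real.cos_sq_add_sin_sq]

lemma norm_sphereNorthPole : ‖sphereNorthPole‖ = 1 := by
  simp [sphereNorthPole, EuclideanSpace.norm_eq, Fin.sum_univ_three]

lemma angle_sphereEquatorPoint {θ φ : ℝ} (h₀ : θ ≤ φ) (h₁ : φ - θ ≤ Real.pi) :
    angle (sphereEquatorPoint θ) (sphereEquatorPoint φ) = φ - θ := by
  have hinner : inner ℝ (sphereEquatorPoint θ) (sphereEquatorPoint φ) = Real.cos (φ - θ) := by
    simp [sphereEquatorPoint, PiLp.inner_apply, Fin.sum_univ_three, Real.cos_sub]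
  rw [angle, hinner, norm_sphereEquatorPoint, norm_sphereEquatorPoint, mul_one, div_one,
    Real.arccos_cos (sub_nonneg.2 h₀) h₁]

lemma angle_sphereEquatorPoint_sphereNorthPole (θ : ℝ) :
    angle (sphereEquatorPoint θ) sphereNorthPole = Real.pi / 2 := by
  rw [angle, norm_sphereEquatorPoint, norm_sphereNorthPole]
  simp [sphereEquatorPoint, sphereNorthPole, PiLp.inner_apply, Fin.sum_univ_three]

def equator {Z : Type*} [MetricSpace Z] (p q : Z) : Set Z :=
  {x | dist p x = Real.pi / 2 ∧ dist x q = Real.pi / 2}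

lemma isClosed_equator {Z : Type*} [MetricSpace Z] (p q : Z) : IsClosed (equator p q) :=
  (isClosed_eq (by fun_prop) continuous_const).inter (isClosed_eq (by fun_prop) continuous_const)

lemma mem_equator_of_dist_le {Z : Type*} [MetricSpace Z] {p q x : Z}
    (hpq : dist p q = Real.pi) (hp : dist p x ≤ Real.pi / 2) (hq : dist q x ≤ Real.pi / 2) :
    x ∈ equator p q := by
  have := dist_triangle_right p q x
  refine ⟨by linarith, ?_⟩
  rw [dist_comm]
  linarith

lemma CATOneSpace.dist_geodesic_le_pi_div_two {Z : Type*} [MetricSpace Z] [CATOneSpace Z]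
    {a b z : Z} {γ : ℝ → Z} (hγ : IsGeodesicSegment γ a b) (hab : dist a b < Real.pi)
    (hza : dist z a = Real.pi / 2) (hzb : dist z b = Real.pi / 2)
    {t : ℝ} (ht : t ∈ Icc 0 (dist a b)) : dist z (γ t) ≤ Real.pi / 2 := by
  set d := dist a b
  have hd : 0 ≤ d := dist_nonneg
  have hperimeter : d + dist b z + dist z a < 2 * Real.pi := by
    rw [dist_comm b z, hzb, hza]; linarith
  calc dist z (γ t)
      ≤ angle sphereNorthPole (sphereEquatorPoint t) :=
        CATOneSpace.comparison a b z γ hγ hperimeter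
          (sphereEquatorPoint 0) (sphereEquatorPoint d) sphereNorthPole (sphereEquatorPoint t)
          (norm_sphereEquatorPoint 0) (norm_sphereEquatorPoint d) norm_sphereNorthPole
          (norm_sphereEquatorPoint t)
          (by rw [angle_sphereEquatorPoint hd (by linarith), sub_zero])
          (by rw [angle_sphereEquatorPoint_sphereNorthPole, dist_comm, hzb])
          (by rw [angle_sphereEquatorPoint_sphereNorthPole, dist_comm, hza])
          t ht
          (by rw [angle_sphereEquatorPoint ht.1 (by linarith [ht.2]), sub_zero])
          (angle_sphereEquatorPoint ht.2 (by linarith [ht.1]))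
    _ = Real.pi / 2 := by rw [angle_comm, angle_sphereEquatorPoint_sphereNorthPole]

theorem equator_closed_and_pi_convex_general {Z : Type*} [MetricSpace Z]
    [CATOneSpace Z] (p q : Z) (hpq : dist p q = Real.pi) :
    IsClosed {x : Z | dist p x = Real.pi / 2 ∧ dist x q = Real.pi / 2} ∧
    ∀ a ∈ {x : Z | dist p x = Real.pi / 2 ∧ dist x q = Real.pi / 2},
      ∀ b ∈ {x : Z | dist p x = Real.pi / 2 ∧ dist x q = Real.pi / 2},
        dist a b < Real.pi → ∀ γ : ℝ → Z, IsGeodesicSegment γ a b →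
          ∀ t ∈ Set.Icc (0 : ℝ) (dist a b),
            γ t ∈ {x : Z | dist p x = Real.pi / 2 ∧ dist x q = Real.pi / 2} := by
  refine ⟨isClosed_equator p q, fun a ha b hb hab γ hγ t ht => ?_⟩
  apply mem_equator_of_dist_le hpq
  · exact CATOneSpace.dist_geodesic_le_pi_div_two hγ hab ha.1 hb.1 ht
  · exact CATOneSpace.dist_geodesic_le_pi_div_two hγ hab
      ((dist_comm q a).trans ha.2) ((dist_comm q b).trans hb.2) ht

/-- In a complete CAT(1) space `Z`, if `dist p q = π` then the equator
`E(p,q) = {x | dist p x = dist x q = π/2}` is closed and `π`-convex: for `a, b ∈ E(p,q)`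
with `dist a b < π`, every point of a geodesic segment from `a` to `b` lies in `E(p,q)`. -/
theorem equator_closed_and_pi_convex {Z : Type*} [MetricSpace Z] [CompleteSpace Z]
    [CATOneSpace Z] (p q : Z) (hpq : dist p q = Real.pi) :
    IsClosed {x : Z | dist p x = Real.pi / 2 ∧ dist x q = Real.pi / 2} ∧
    ∀ a ∈ {x : Z | dist p x = Real.pi / 2 ∧ dist x q = Real.pi / 2},
      ∀ b ∈ {x : Z | dist p x = Real.pi / 2 ∧ dist x q = Real.pi / 2},
        dist a b < Real.pi → ∀ γ : ℝ → Z, IsGeodesicSegment γ a b →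
          ∀ t ∈ Set.Icc (0 : ℝ) (dist a b),
            γ t ∈ {x : Z | dist p x = Real.pi / 2 ∧ dist x q = Real.pi / 2} :=
  equator_closed_and_pi_convex_general p q hpq
end

section
/- Let (Z, ρ) be a complete CAT(1) space and p, q ∈ Z with ρ(p,q) = π. Then the suspension set Σ(p,q) = {x ∈ Z | ρ(p,x) + ρ(x,q) = π} is closed and π-convex in Z. -/
/-!
Let `a, b ∈ Σ(p,q)` and let `m` lie on a geodesic from `a` to `b`. Since `ρ(a,q) = π - ρ(a,p)`
and `ρ(b,q) = π - ρ(b,p)`, the comparison triangles of `abp` and `abq` can be drawn on `S²`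
over the same side `a'b'`, with antipodal third vertices `p'` and `-p'`. The comparison
inequality then gives `ρ(p,m) + ρ(m,q) ≤ ∠(p',m') + ∠(-p',m') = π`. This needs both perimeters
to be `< 2π`; if one of them is `2π`, the other triangle is degenerate, so `p` (or `q`) lies on
the geodesic and the triangle inequality finishes.
-/

open Set InnerProductGeometry

open Real

noncomputable def spherePoint (θ φ : ℝ) : EuclideanSpace ℝ (Fin 3) :=
  !₂[cos θ, sin θ * cos φ, sin θ * sin φ]

lemma norm_spherePoint (θ φ : ℝ) : ‖spherePoint θ φ‖ = 1 := by
  rw [EuclideanSpace.norm_eq, Real.sqrt_eq_one]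
  simp only [spherePoint, norm_eq_abs, sq_abs, Fin.sum_univ_three, Fin.isValue,
    Matrix.cons_val_zero, Matrix.cons_val_one, Matrix.cons_val]
  nlinarith [sin_sq_add_cos_sq θ, sin_sq_add_cos_sq φ]

lemma neg_spherePoint (θ φ : ℝ) : -spherePoint θ φ = spherePoint (π - θ) (φ + π) := by
  ext i; fin_cases i <;> simp [spherePoint]

lemma angle_spherePoint (θ₁ θ₂ φ : ℝ) :
    angle (spherePoint θ₁ 0) (spherePoint θ₂ φ) =
      arccos (cos θ₁ * cos θ₂ + sin θ₁ * sin θ₂ * cos φ) := by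
  rw [angle, norm_spherePoint, norm_spherePoint]
  simp only [spherePoint, cos_zero, mul_one, sin_zero, mul_zero, PiLp.inner_apply,
    RCLike.inner_apply, ringHom_apply, Fin.sum_univ_three, Fin.isValue, Matrix.cons_val_zero,
    Matrix.cons_val_one, Matrix.cons_val, add_zero, div_one]
  congr 1
  ring

lemma angle_spherePoint_zero_left {θ : ℝ} (φ : ℝ) (h₀ : 0 ≤ θ) (hπ : θ ≤ π) :
    angle (spherePoint 0 0) (spherePoint θ φ) = θ := by
  simp [angle_spherePoint, arccos_cos h₀ hπ]

lemma angle_spherePoint_zero_zero {θ₁ θ₂ : ℝ} (h₁ : 0 ≤ θ₁) (h₁' : θ₁ ≤ π) (h₂ : 0 ≤ θ₂)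
    (h₂' : θ₂ ≤ π) :
    angle (spherePoint θ₁ 0) (spherePoint θ₂ 0) = |θ₁ - θ₂| := by
  rw [angle_spherePoint, cos_zero, mul_one, ← cos_sub, ← cos_abs, arccos_cos (abs_nonneg _)]
  exact abs_le.2 ⟨by linarith, by linarith⟩

lemma sq_cos_sub_cos_mul_cos_le {α c d : ℝ} (hd₀ : 0 ≤ d) (hdπ : d ≤ π)
    (h₁ : α ≤ c + d) (h₂ : d ≤ α + c) (h₃ : c ≤ α + d) (h₄ : α + c + d ≤ 2 * π) :
    (cos d - cos α * cos c) ^ 2 ≤ (sin α * sin c) ^ 2 := by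
  have hlow : cos d ≤ cos (α - c) := by
    rw [← cos_abs (α - c)]
    exact cos_le_cos_of_nonneg_of_le_pi (abs_nonneg _) hdπ (abs_le.2 ⟨by linarith, by linarith⟩)
  have hup : cos (α + c) ≤ cos d := by
    rcases le_or_gt (α + c) π with h | h
    · exact cos_le_cos_of_nonneg_of_le_pi hd₀ h h₂
    · rw [← cos_two_pi_sub]
      exact cos_le_cos_of_nonneg_of_le_pi hd₀ (by linarith) (by linarith)
  rw [cos_sub] at hlow
  rw [cos_add] at hup
  nlinarith

/-- The spherical law of cosines: a triangle on `S²` with sides `α = |ab|`, `c = |az|`,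
`d = |bz|` exists, `φ` being its angle at `a`. -/
lemma exists_cos_add_sin_mul_cos_eq {α c d : ℝ} (hd₀ : 0 ≤ d) (hdπ : d ≤ π)
    (h₁ : α ≤ c + d) (h₂ : d ≤ α + c) (h₃ : c ≤ α + d) (h₄ : α + c + d ≤ 2 * π) :
    ∃ φ, cos α * cos c + sin α * sin c * cos φ = cos d := by
  have hsq := sq_cos_sub_cos_mul_cos_le hd₀ hdπ h₁ h₂ h₃ h₄
  rcases eq_or_ne (sin α * sin c) 0 with h | h
  · refine ⟨0, ?_⟩
    rw [h, zero_pow two_ne_zero] at hsq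
    rw [h, zero_mul, add_zero]
    linarith [pow_eq_zero_iff two_ne_zero |>.1 (le_antisymm hsq (sq_nonneg _))]
  have he : |(cos d - cos α * cos c) / (sin α * sin c)| ≤ 1 := by
    rw [abs_div, div_le_one (abs_pos.2 h)]
    exact sq_le_sq.1 hsq
  refine ⟨arccos ((cos d - cos α * cos c) / (sin α * sin c)), ?_⟩
  rw [cos_arccos (abs_le.1 he).1 (abs_le.1 he).2, mul_div_cancel₀ _ h]
  ring

namespace IsGeodesicSegment

variable {Z : Type*} [MetricSpace Z] {γ : ℝ → Z} {x y : Z} {t : ℝ}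

lemma dist_left (hγ : IsGeodesicSegment γ x y) (ht : t ∈ Icc 0 (dist x y)) :
    dist x (γ t) = t := by
  obtain ⟨h₀, -, hγd⟩ := hγ
  rw [← h₀, hγd 0 ⟨le_rfl, dist_nonneg⟩ t ht, zero_sub, abs_neg, abs_of_nonneg ht.1]

lemma dist_right (hγ : IsGeodesicSegment γ x y) (ht : t ∈ Icc 0 (dist x y)) :
    dist (γ t) y = dist x y - t := by
  obtain ⟨-, h₁, hγd⟩ := hγ
  calc dist (γ t) y = dist (γ t) (γ (dist x y)) := by rw [h₁]
    _ = dist x y - t := by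
      rw [hγd t ht _ ⟨dist_nonneg, le_rfl⟩, abs_sub_comm, abs_of_nonneg (sub_nonneg.2 ht.2)]

end IsGeodesicSegment

namespace CATOneSpace

variable {Z : Type*} [MetricSpace Z] [CATOneSpace Z] {γ : ℝ → Z} {a b p q z : Z} {t : ℝ}

lemma dist_le_angle_spherePoint (hγ : IsGeodesicSegment γ a b) (hab : dist a b ≤ π)
    (haz : dist a z ≤ π) (hbz : dist b z ≤ π) (hper : dist a b + dist b z + dist z a < 2 * π)
    {φ : ℝ} (hφ : cos (dist a b) * cos (dist a z) + sin (dist a b) * sin (dist a z) * cos φ =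
      cos (dist b z))
    (ht : t ∈ Icc 0 (dist a b)) :
    dist z (γ t) ≤ angle (spherePoint (dist a z) φ) (spherePoint t 0) :=
  comparison a b z γ hγ hper _ _ _ _ (norm_spherePoint 0 0) (norm_spherePoint _ 0)
    (norm_spherePoint _ φ) (norm_spherePoint t 0) (angle_spherePoint_zero_left 0 dist_nonneg hab)
    (by rw [angle_spherePoint, hφ, arccos_cos dist_nonneg hbz])
    (angle_spherePoint_zero_left φ dist_nonneg haz) t ht
    (angle_spherePoint_zero_left 0 ht.1 (ht.2.trans hab))
    (by rw [angle_spherePoint_zero_zero ht.1 (ht.2.trans hab) dist_nonneg hab, abs_sub_comm,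
      abs_of_nonneg (sub_nonneg.2 ht.2)])

/-- A point `z` with `|ab| = |az| + |zb| < π` lies on every geodesic from `a` to `b`. -/
lemma dist_le_abs_sub_of_dist_eq_add (hγ : IsGeodesicSegment γ a b) (hab : dist a b < π)
    (hz : dist a b = dist a z + dist z b) (ht : t ∈ Icc 0 (dist a b)) :
    dist z (γ t) ≤ |dist a z - t| := by
  have hφ : cos (dist a b) * cos (dist a z) + sin (dist a b) * sin (dist a z) * cos 0 =
      cos (dist b z) := by
    rw [cos_zero, mul_one, ← cos_sub, dist_comm b z]
    congr 1
    linarith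
  have haz : dist a z ≤ dist a b := by linarith [dist_nonneg (x := z) (y := b)]
  have hbz : dist b z ≤ dist a b := by linarith [dist_nonneg (x := a) (y := z), dist_comm b z]
  calc dist z (γ t) ≤ angle (spherePoint (dist a z) 0) (spherePoint t 0) :=
        dist_le_angle_spherePoint hγ hab.le (by linarith) (by linarith)
          (by linarith [dist_comm a z, dist_comm b z]) hφ ht
    _ = |dist a z - t| :=
        angle_spherePoint_zero_zero dist_nonneg (by linarith) ht.1 (by linarith [ht.2])

lemma dist_add_dist_le_pi_of_dist_eq_add (hγ : IsGeodesicSegment γ a b) (hab : dist a b < π)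
    (ha : dist p a + dist a q = π) (hb : dist p b + dist b q = π)
    (hp : dist a b = dist a p + dist p b) (ht : t ∈ Icc 0 (dist a b)) :
    dist p (γ t) + dist (γ t) q ≤ π := by
  have hpm := dist_le_abs_sub_of_dist_eq_add hγ hab hp ht
  have hqa := dist_triangle (γ t) a q
  have hqb := dist_triangle (γ t) b q
  rw [dist_comm (γ t) a, hγ.dist_left ht] at hqa
  rw [hγ.dist_right ht] at hqb
  rcases abs_cases (dist a p - t) with ⟨h, -⟩ | ⟨h, -⟩ <;>
    linarith [dist_comm a p, dist_comm p b]

lemma dist_add_dist_le_pi_of_lt (hγ : IsGeodesicSegment γ a b) (hab : dist a b ≤ π)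
    (ha : dist p a + dist a q = π) (hb : dist p b + dist b q = π)
    (hp : dist a b < dist a p + dist p b) (hq : dist a b < dist a q + dist q b)
    (ht : t ∈ Icc 0 (dist a b)) :
    dist p (γ t) + dist (γ t) q ≤ π := by
  have hap : dist a p ≤ π := by linarith [dist_comm a p, dist_nonneg (x := a) (y := q)]
  have hbp : dist b p ≤ π := by linarith [dist_comm b p, dist_nonneg (x := b) (y := q)]
  have haq : dist a q = π - dist a p := by linarith [dist_comm a p]
  have hbq : dist b q = π - dist b p := by linarith [dist_comm b p]
  obtain ⟨φ, hφ⟩ := exists_cos_add_sin_mul_cos_eq (α := dist a b) dist_nonneg hbp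
    (by linarith [dist_comm b p]) (by linarith [dist_triangle b a p, dist_comm a b])
    (dist_triangle a b p) (by linarith [dist_comm q b])
  have hpm := dist_le_angle_spherePoint hγ hab hap hbp
    (by linarith [dist_comm p a, dist_comm q b]) hφ ht
  have hφ' : cos (dist a b) * cos (dist a q) + sin (dist a b) * sin (dist a q) * cos (φ + π) =
      cos (dist b q) := by
    rw [haq, hbq, cos_pi_sub, sin_pi_sub, cos_pi_sub, cos_add_pi]
    linarith
  have hqm := dist_le_angle_spherePoint hγ hab
    (by linarith [dist_nonneg (x := a) (y := p)]) (by linarith [dist_nonneg (x := b) (y := p)])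
    (by linarith [dist_comm q a, dist_comm p b]) hφ' ht
  rw [haq, ← neg_spherePoint, angle_neg_left] at hqm
  linarith [dist_comm q (γ t)]

lemma dist_add_dist_le_pi (hγ : IsGeodesicSegment γ a b) (hab : dist a b < π)
    (ha : dist p a + dist a q = π) (hb : dist p b + dist b q = π)
    (ht : t ∈ Icc 0 (dist a b)) :
    dist p (γ t) + dist (γ t) q ≤ π := by
  rcases (dist_triangle a p b).eq_or_lt with hp | hp
  · exact dist_add_dist_le_pi_of_dist_eq_add hγ hab ha hb hp ht
  rcases (dist_triangle a q b).eq_or_lt with hq | hq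
  · have hswap := dist_add_dist_le_pi_of_dist_eq_add (p := q) (q := p) hγ hab
      (by linarith [dist_comm p a, dist_comm a q]) (by linarith [dist_comm p b, dist_comm b q])
      hq ht
    linarith [dist_comm p (γ t), dist_comm q (γ t)]
  · exact dist_add_dist_le_pi_of_lt hγ hab.le ha hb hp hq ht

end CATOneSpace

theorem suspension_closed_and_pi_convex_general {Z : Type*} [MetricSpace Z]
    [CATOneSpace Z] (p q : Z) (hpq : dist p q = Real.pi) :
    IsClosed {x : Z | dist p x + dist x q = Real.pi} ∧
    ∀ a ∈ {x : Z | dist p x + dist x q = Real.pi},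
      ∀ b ∈ {x : Z | dist p x + dist x q = Real.pi},
        dist a b < Real.pi → ∀ γ : ℝ → Z, IsGeodesicSegment γ a b →
          ∀ t ∈ Set.Icc (0 : ℝ) (dist a b),
            γ t ∈ {x : Z | dist p x + dist x q = Real.pi} := by
  refine ⟨isClosed_eq (by fun_prop) continuous_const, fun a ha b hb hab γ hγ t ht => ?_⟩
  exact le_antisymm (CATOneSpace.dist_add_dist_le_pi hγ hab ha hb ht)
    (hpq ▸ dist_triangle p (γ t) q)

/-- In a complete CAT(1) space `Z`, if `dist p q = π` then the suspension
set `Σ(p,q) = {x | dist p x + dist x q = π}` is closed and `π`-convex: for `a, b ∈ Σ(p,q)`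
with `dist a b < π`, every point of a geodesic segment from `a` to `b` lies in `Σ(p,q)`. -/
theorem suspension_closed_and_pi_convex {Z : Type*} [MetricSpace Z] [CompleteSpace Z]
    [CATOneSpace Z] (p q : Z) (hpq : dist p q = Real.pi) :
    IsClosed {x : Z | dist p x + dist x q = Real.pi} ∧
    ∀ a ∈ {x : Z | dist p x + dist x q = Real.pi},
      ∀ b ∈ {x : Z | dist p x + dist x q = Real.pi},
        dist a b < Real.pi → ∀ γ : ℝ → Z, IsGeodesicSegment γ a b →
          ∀ t ∈ Set.Icc (0 : ℝ) (dist a b),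
            γ t ∈ {x : Z | dist p x + dist x q = Real.pi} :=
  suspension_closed_and_pi_convex_general p q hpq
end

section
/- Let K be a compact metric space, K' a metric space isometric to K, and f : K → K' a surjective 1-Lipschitz map. Then f is an isometry. -/
/-!
Composing with an isometry `K' ≃ᵢ K` reduces to a surjective `1`-Lipschitz self-map `f` of `K`.
Any right inverse `g` of `f` is non-contracting. Since `K × K` is compact, the `g`-orbit of a
pair `(x, y)` has two close terms, and as `g` does not contract, this makes `(gᵏ x, gᵏ y)` close
to `(x, y)` for some `k ≥ 1`. Hence `d(g x, g y) ≤ d(gᵏ x, gᵏ y) ≤ d(x, y) + ε`, so `g` is an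
isometry, and its range is dense and compact, so `g` is bijective with inverse `f`.
-/

open Function

theorem AntilipschitzWith.iterate {α : Type*} [PseudoEMetricSpace α] {K : NNReal} {f : α → α}
    (hf : AntilipschitzWith K f) : ∀ n, AntilipschitzWith (K ^ n) f^[n]
  | 0 => by simpa only [pow_zero] using! AntilipschitzWith.id
  | n + 1 => by rw [pow_succ']; exact (AntilipschitzWith.iterate hf n).comp hf

theorem exists_lt_dist_lt_of_compactSpace {α : Type*} [PseudoMetricSpace α] [CompactSpace α]
    (u : ℕ → α) {ε : ℝ} (hε : 0 < ε) : ∃ m n, m < n ∧ dist (u m) (u n) < ε := by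
  obtain ⟨_, φ, hφ, hlim⟩ := SeqCompactSpace.tendsto_subseq u
  obtain ⟨N, hN⟩ := Metric.cauchySeq_iff'.1 hlim.cauchySeq ε hε
  exact ⟨φ N, φ (N + 1), hφ N.lt_succ_self, by simpa [dist_comm] using hN (N + 1) N.le_succ⟩

namespace AntilipschitzWith

section PseudoMetricSpace

variable {α : Type*} [PseudoMetricSpace α] {f : α → α}

theorem dist_le_dist_iterate (hf : AntilipschitzWith 1 f) (n : ℕ) (x y : α) :
    dist x y ≤ dist (f^[n] x) (f^[n] y) := by
  simpa using (hf.iterate n).le_mul_dist x y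

variable [CompactSpace α]

theorem exists_dist_iterate_succ_lt (hf : AntilipschitzWith 1 f) (x y : α) {ε : ℝ} (hε : 0 < ε) :
    ∃ k, dist x (f^[k + 1] x) < ε ∧ dist y (f^[k + 1] y) < ε := by
  obtain ⟨m, _, hmn, hdist⟩ :=
    exists_lt_dist_lt_of_compactSpace (fun n => (f^[n] x, f^[n] y)) hε
  obtain ⟨k, rfl⟩ := Nat.exists_eq_add_of_lt hmn
  obtain ⟨hx, hy⟩ := max_lt_iff.1 hdist
  dsimp only at hx hy
  rw [add_assoc, iterate_add_apply] at hx hy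
  exact ⟨k, (hf.dist_le_dist_iterate m _ _).trans_lt hx,
    (hf.dist_le_dist_iterate m _ _).trans_lt hy⟩

theorem isometry_of_compactSpace (hf : AntilipschitzWith 1 f) : Isometry f := by
  refine Isometry.of_dist_eq fun x y => le_antisymm ?_ (hf.dist_le_dist_iterate 1 x y)
  refine le_of_forall_pos_lt_add fun ε hε => ?_
  obtain ⟨k, hx, hy⟩ := hf.exists_dist_iterate_succ_lt x y (half_pos hε)
  calc dist (f x) (f y) ≤ dist (f^[k + 1] x) (f^[k + 1] y) := hf.dist_le_dist_iterate k _ _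
    _ ≤ dist (f^[k + 1] x) x + dist x y + dist y (f^[k + 1] y) := dist_triangle4 _ _ _ _
    _ < dist x y + ε := by rw [dist_comm] at hx; linarith

theorem denseRange_of_compactSpace (hf : AntilipschitzWith 1 f) : DenseRange f := by
  refine Metric.denseRange_iff.2 fun x ε hε => ?_
  obtain ⟨k, hx, -⟩ := hf.exists_dist_iterate_succ_lt x x hε
  exact ⟨f^[k] x, by rwa [iterate_succ_apply'] at hx⟩

end PseudoMetricSpace

theorem surjective_of_compactSpace {α : Type*} [MetricSpace α] [CompactSpace α] {f : α → α}
    (hf : AntilipschitzWith 1 f) : Surjective f := by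
  have hclosed := (isCompact_range hf.isometry_of_compactSpace.continuous).isClosed
  rw [← Set.range_eq_univ, ← hclosed.closure_eq]
  exact hf.denseRange_of_compactSpace.closure_range

end AntilipschitzWith

theorem LipschitzWith.isometry_of_surjective {α : Type*} [MetricSpace α] [CompactSpace α]
    {f : α → α} (hf : LipschitzWith 1 f) (hsurj : Surjective f) : Isometry f := by
  set g := surjInv hsurj
  have hfg : RightInverse g f := rightInverse_surjInv hsurj
  have hg : AntilipschitzWith 1 g := fun x y => by
    simpa [hfg x, hfg y] using hf (g x) (g y)
  refine fun x y => ?_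
  obtain ⟨x, rfl⟩ := hg.surjective_of_compactSpace x
  obtain ⟨y, rfl⟩ := hg.surjective_of_compactSpace y
  rw [hfg x, hfg y, hg.isometry_of_compactSpace]

/-- A surjective `1`-Lipschitz map from a compact metric space onto a
metric space isometric to it is an isometry. -/
theorem surjective_lipschitz_one_of_isometric_compact_is_isometry
    {K K' : Type*} [MetricSpace K] [CompactSpace K] [MetricSpace K']
    (h : Nonempty (K ≃ᵢ K')) (f : K → K') (hf : LipschitzWith 1 f)
    (hsurj : Function.Surjective f) : Isometry f := by
  obtain ⟨e⟩ := h
  have hlip : LipschitzWith 1 (e.symm ∘ f) := by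
    simpa using e.symm.isometry.lipschitz.comp hf
  have hiso := hlip.isometry_of_surjective (e.symm.surjective.comp hsurj)
  exact fun x y => by rw [← e.symm.isometry (f x) (f y)]; exact hiso x y
end

section
/- Let d ≥ 1 and let N be a nonempty closed subset of the unit round sphere S^d (with the angular metric) such that the closed hemispheres {H_n}_{n∈N} centered at points of N cover S^d. If the diameter of N is strictly less than arccos(−1/(d+1)), then N has a circumcenter z with circumradius less than π/2, and the antipode of z is not covered by any hemisphere H_n — a contradiction. Hence any closed set N ⊆ S^d whose centered closed hemispheres cover S^d must have diameter at least arccos(−1/(d+1)). -/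
open InnerProductGeometry Metric
open scoped RealInnerProductSpace

/-!
Let `c` be the least inner product `⟪a, b⟫` of two points of `N`, attained by compactness; we show
that `angle a b = arccos c` is at least `arccos (-1/(d+1))`. Otherwise `c > -1/(d+1)`. By
Carathéodory every point `x` of the convex hull of `N` is a convex combination `∑ wᵢ zᵢ` of at
most `d + 2` points of `N`, so `‖x‖² ≥ c + (1 - c) ∑ wᵢ² ≥ c + (1 - c)/(d + 2) > 0`. Hence `0` lies
outside the closed convex hull of `N`, and a separating hyperplane yields a unit vector `x` with
`⟪n, x⟫ < 0` for every `n ∈ N`: no hemisphere centered in `N` contains `x`.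
-/

namespace InnerProductGeometry

variable {E : Type*} [NormedAddCommGroup E] [InnerProductSpace ℝ E]

theorem inner_nonneg_of_angle_le_pi_div_two {x y : E} (h : angle x y ≤ Real.pi / 2) :
    0 ≤ ⟪x, y⟫ := by
  rw [← cos_angle_mul_norm_mul_norm]
  refine mul_nonneg (Real.cos_nonneg_of_mem_Icc ⟨?_, h⟩) (by positivity)
  linarith [angle_nonneg x y, Real.pi_pos]

theorem angle_eq_arccos_inner {x y : E} (hx : ‖x‖ = 1) (hy : ‖y‖ = 1) :
    angle x y = Real.arccos ⟪x, y⟫ := by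
  rw [angle, hx, hy, mul_one, div_one]

end InnerProductGeometry

section UnitVectors

variable {E : Type*} [NormedAddCommGroup E] [InnerProductSpace ℝ E]

theorem IsCompact.exists_forall_inner_le {K : Set E} (hK : IsCompact K) (hne : K.Nonempty) :
    ∃ a ∈ K, ∃ b ∈ K, ∀ x ∈ K, ∀ y ∈ K, ⟪a, b⟫ ≤ ⟪x, y⟫ := by
  obtain ⟨⟨a, b⟩, ⟨ha, hb⟩, hmin⟩ := (hK.prod hK).exists_isMinOn (hne.prod hne)
    (continuous_inner (𝕜 := ℝ)).continuousOn
  exact ⟨a, ha, b, hb, fun x hx y hy => hmin (Set.mk_mem_prod hx hy)⟩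

theorem add_mul_sum_sq_le_norm_sum_smul_sq {ι : Type*} [Fintype ι] {z : ι → E} {w : ι → ℝ}
    {c : ℝ} (hz : ∀ i, ‖z i‖ = 1) (hc : ∀ i j, i ≠ j → c ≤ ⟪z i, z j⟫) (hw0 : ∀ i, 0 ≤ w i)
    (hw1 : ∑ i, w i = 1) :
    c + (1 - c) * ∑ i, w i ^ 2 ≤ ‖∑ i, w i • z i‖ ^ 2 := by
  classical
  have gram : ‖∑ i, w i • z i‖ ^ 2 - c = ∑ i, ∑ j, w i * w j * (⟪z i, z j⟫ - c) := by
    have hc_sum : ∑ i, ∑ j, w i * w j * c = c := by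
      simp only [← Finset.sum_mul, ← Finset.mul_sum, hw1, one_mul]
    have hnorm : ‖∑ i, w i • z i‖ ^ 2 = ∑ i, ∑ j, w i * w j * ⟪z i, z j⟫ := by
      rw [← real_inner_self_eq_norm_sq, sum_inner]
      refine Finset.sum_congr rfl fun i _ => ?_
      rw [inner_sum]
      refine Finset.sum_congr rfl fun j _ => ?_
      rw [real_inner_smul_left, real_inner_smul_right, mul_assoc]
    simp only [mul_sub, Finset.sum_sub_distrib, hc_sum, hnorm]
  have diag : (1 - c) * ∑ i, w i ^ 2 =
      ∑ i, ∑ j, if i = j then w i * w j * (⟪z i, z j⟫ - c) else 0 := by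
    simp only [Finset.sum_ite_eq, Finset.mem_univ, if_true, real_inner_self_eq_norm_sq, hz,
      Finset.mul_sum]
    exact Finset.sum_congr rfl fun i _ => by ring
  have off_diag : (1 - c) * ∑ i, w i ^ 2 ≤ ∑ i, ∑ j, w i * w j * (⟪z i, z j⟫ - c) := by
    rw [diag]
    refine Finset.sum_le_sum fun i _ => Finset.sum_le_sum fun j _ => ?_
    split_ifs with hij
    · exact le_rfl
    · exact mul_nonneg (mul_nonneg (hw0 i) (hw0 j)) (sub_nonneg.2 (hc i j hij))
  linarith

variable [FiniteDimensional ℝ E] {N : Set E} {c : ℝ}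

theorem le_norm_sq_of_mem_convexHull (hN : N ⊆ sphere 0 1)
    (hc : ∀ a ∈ N, ∀ b ∈ N, c ≤ ⟪a, b⟫) {x : E} (hx : x ∈ convexHull ℝ N) :
    (Module.finrank ℝ E * c + 1) / (Module.finrank ℝ E + 1) ≤ ‖x‖ ^ 2 := by
  obtain ⟨ι, _, z, w, hzN, hz_ind, hw0, hw1, rfl⟩ := eq_pos_convex_span_of_mem_convexHull hx
  have hzN' (i : ι) : z i ∈ N := hzN ⟨i, rfl⟩
  have hz (i : ι) : ‖z i‖ = 1 := mem_sphere_zero_iff_norm.1 (hN (hzN' i))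
  have hcard : (Fintype.card ι : ℝ) ≤ Module.finrank ℝ E + 1 := by
    exact_mod_cast hz_ind.card_le_finrank_succ.trans (Nat.succ_le_succ (Submodule.finrank_le _))
  have hsq : 1 ≤ (Module.finrank ℝ E + 1) * ∑ i, w i ^ 2 :=
    calc (1 : ℝ) = (∑ i, w i) ^ 2 := by rw [hw1, one_pow]
      _ ≤ Fintype.card ι * ∑ i, w i ^ 2 := sq_sum_le_card_mul_sum_sq
      _ ≤ _ := by gcongr
  have hc1 : c ≤ 1 := by
    obtain ⟨i⟩ : Nonempty ι := by
      by_contra h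
      simp [not_nonempty_iff.1 h] at hw1
    simpa [real_inner_self_eq_norm_sq, hz] using hc _ (hzN' i) _ (hzN' i)
  have hgram := add_mul_sum_sq_le_norm_sum_smul_sq hz (fun i j _ => hc _ (hzN' i) _ (hzN' j))
    (fun i => (hw0 i).le) hw1
  rw [div_le_iff₀ (by positivity)]
  nlinarith

theorem zero_notMem_closure_convexHull (hN : N ⊆ sphere 0 1)
    (hc : ∀ a ∈ N, ∀ b ∈ N, c ≤ ⟪a, b⟫) (hcn : -1 < Module.finrank ℝ E * c) :
    (0 : E) ∉ closure (convexHull ℝ N) := by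
  intro h0
  have hpos : 0 < (Module.finrank ℝ E * c + 1) / (Module.finrank ℝ E + 1) :=
    div_pos (by linarith) (by positivity)
  have h0_le : _ ≤ ‖(0 : E)‖ ^ 2 :=
    closure_minimal (fun x hx => le_norm_sq_of_mem_convexHull hN hc hx)
      (isClosed_le continuous_const (continuous_norm.pow 2)) h0
  rw [norm_zero, zero_pow two_ne_zero] at h0_le
  linarith

end UnitVectors

theorem exists_mem_sphere_forall_inner_neg {E : Type*} [NormedAddCommGroup E]
    [InnerProductSpace ℝ E] [CompleteSpace E] {N : Set E} (hN : N.Nonempty)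
    (h0 : (0 : E) ∉ closure (convexHull ℝ N)) :
    ∃ x ∈ sphere (0 : E) 1, ∀ a ∈ N, ⟪a, x⟫ < 0 := by
  obtain ⟨f, u, hf0, hfN⟩ :=
    geometric_hahn_banach_point_closed (convex_convexHull ℝ N).closure isClosed_closure h0
  set v := (InnerProductSpace.toDual ℝ E).symm f
  have hv (a : E) (ha : a ∈ N) : 0 < ⟪v, a⟫ := by
    rw [map_zero] at hf0
    rw [InnerProductSpace.toDual_symm_apply]
    exact hf0.trans (hfN a (subset_closure (subset_convexHull ℝ N ha)))
  have hv0 : v ≠ 0 := by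
    obtain ⟨a, ha⟩ := hN
    intro hv_eq
    simpa [hv_eq] using hv a ha
  refine ⟨-(‖v‖⁻¹ • v), by simp [norm_smul, hv0], fun a ha => ?_⟩
  rw [inner_neg_right, real_inner_smul_right, real_inner_comm, neg_lt_zero]
  exact mul_pos (by positivity) (hv a ha)

theorem hemisphere_cover_diameter_bound_general (d : ℕ)
    (N : Set (EuclideanSpace ℝ (Fin (d + 1))))
    (hNsub : N ⊆ sphere (0 : EuclideanSpace ℝ (Fin (d + 1))) 1)
    (hNne : N.Nonempty) (hNcl : IsClosed N)
    (hcover : ∀ x ∈ sphere (0 : EuclideanSpace ℝ (Fin (d + 1))) 1,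
      ∃ n ∈ N, angle n x ≤ Real.pi / 2) :
    ∃ a ∈ N, ∃ b ∈ N, Real.arccos (-(1 / (d + 1))) ≤ angle a b := by
  have hN : IsCompact N := (isCompact_sphere _ _).of_isClosed_subset hNcl hNsub
  obtain ⟨a, ha, b, hb, hmin⟩ := hN.exists_forall_inner_le hNne
  refine ⟨a, ha, b, hb, ?_⟩
  rw [angle_eq_arccos_inner (mem_sphere_zero_iff_norm.1 (hNsub ha))
    (mem_sphere_zero_iff_norm.1 (hNsub hb))]
  by_contra! hlt
  have hab : -1 < Module.finrank ℝ (EuclideanSpace ℝ (Fin (d + 1))) * ⟪a, b⟫ := by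
    have hab' : -(1 / (d + 1 : ℝ)) < ⟪a, b⟫ :=
      lt_of_not_ge fun hle => hlt.not_ge (Real.arccos_le_arccos hle)
    have hmul := mul_lt_mul_of_pos_left hab' (by positivity : (0 : ℝ) < d + 1)
    rw [finrank_euclideanSpace_fin, Nat.cast_add_one]
    rwa [mul_neg, mul_one_div_cancel (by positivity)] at hmul
  obtain ⟨x, hx, hneg⟩ := exists_mem_sphere_forall_inner_neg hNne
    (zero_notMem_closure_convexHull hNsub hmin hab)
  obtain ⟨n, hn, hangle⟩ := hcover x hx
  exact (hneg n hn).not_ge (inner_nonneg_of_angle_le_pi_div_two hangle)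

/-- Let `d ≥ 1` and let `N` be a nonempty closed subset of the unit round
sphere `S^d ⊆ ℝ^{d+1}` (with the angular metric, i.e. the angle between unit vectors) such
that the closed hemispheres centered at the points of `N` cover the whole sphere.  Then the
diameter of `N` is at least `arccos (−1/(d+1))`: there are points `a, b ∈ N` with
`angle a b ≥ arccos (−1/(d+1))`. -/
theorem hemisphere_cover_diameter_bound (d : ℕ) (hd : 1 ≤ d)
    (N : Set (EuclideanSpace ℝ (Fin (d + 1))))
    (hNsub : N ⊆ sphere (0 : EuclideanSpace ℝ (Fin (d + 1))) 1)
    (hNne : N.Nonempty) (hNcl : IsClosed N)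
    (hcover : ∀ x ∈ sphere (0 : EuclideanSpace ℝ (Fin (d + 1))) 1,
      ∃ n ∈ N, angle n x ≤ Real.pi / 2) :
    ∃ a ∈ N, ∃ b ∈ N, Real.arccos (-(1 / (d + 1))) ≤ angle a b :=
  hemisphere_cover_diameter_bound_general d N hNsub hNne hNcl hcover
end

section
/- Let Z be a compact Hausdorff space with a discrete group G acting by homeomorphisms, and let Tω denote the ultrafilter-limit operators for ω ∈ βG. Suppose D : Z × Z → [0, ∞] satisfies D(Tω x, Tω y) ≤ D(x, y) for all ω, x, y, and suppose no pair of distinct points is 'incompressible', i.e., for all x ≠ y there is ω with D(Tω x, Tω y) < D(x,y). Define the G-compression comp_G(x,y) = sup over ω of (D(x,y) − D(Tω x, Tω y)), and assume this supremum is attained for every pair (x,y). Then one obtains a contradiction unless for every pair x, y there exist ω with Tω x = Tω y; that is, every pair of points is proximal (collapsible). -/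
/-!
If `ω` attains the maximal compression of `(x, y)` but `T ω x ≠ T ω y`, then some `ν` strictly
compresses `(T ω x, T ω y)`. Since `T (ν * ω) = T ν ∘ T ω`, the compression is a cocycle,
`comp_{ν * ω}(x, y) = comp_ω(x, y) + comp_ν(T ω x, T ω y)`, so `ν * ω` would compress `(x, y)`
strictly more than `ω`.
-/

open Filter Topology

attribute [local instance] Ultrafilter.mul

section UltrafilterLimit

variable {G Z : Type*} [Monoid G] [TopologicalSpace Z] [MulAction G Z]

theorem tendsto_smul_ultrafilter_mul (hcont : ∀ g : G, Continuous fun z : Z => g • z)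
    {ν ω : Ultrafilter G} {z a b : Z}
    (hω : Tendsto (fun g : G => g • z) ω (𝓝 a)) (hν : Tendsto (fun g : G => g • a) ν (𝓝 b)) :
    Tendsto (fun g : G => g • z) (ν * ω : Ultrafilter G) (𝓝 b) := by
  rw [tendsto_nhds]
  intro V hV hbV
  change ∀ᶠ g in ((ν * ω : Ultrafilter G) : Filter G), g • z ∈ V
  rw [Ultrafilter.eventually_mul]
  filter_upwards [hν.eventually (hV.mem_nhds hbV)] with g hgV
  have hgω : Tendsto (fun h : G => g • h • z) ω (𝓝 (g • a)) := ((hcont g).tendsto a).comp hω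
  filter_upwards [hgω.eventually (hV.mem_nhds hgV)] with h hh
  rwa [mul_smul]

theorem ultrafilterLimit_mul [T2Space Z] (hcont : ∀ g : G, Continuous fun z : Z => g • z)
    (T : Ultrafilter G → Z → Z)
    (hT : ∀ (ω : Ultrafilter G) (z : Z), Tendsto (fun g : G => g • z) ω (𝓝 (T ω z)))
    (ν ω : Ultrafilter G) (z : Z) : T (ν * ω) z = T ν (T ω z) :=
  tendsto_nhds_unique (hT _ z) (tendsto_smul_ultrafilter_mul hcont (hT ω z) (hT ν (T ω z)))

end UltrafilterLimit

theorem all_pairs_proximal_of_no_incompressible_pair_general {G Z : Type*} [Group G]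
    [TopologicalSpace Z] [T2Space Z] [MulAction G Z]
    (hcont : ∀ g : G, Continuous fun z : Z => g • z)
    (T : Ultrafilter G → Z → Z)
    (hT : ∀ (ω : Ultrafilter G) (z : Z), Tendsto (fun g : G => g • z) ω (𝓝 (T ω z)))
    (D : Z → Z → ℝ)
    (hcomp : ∀ x y : Z, x ≠ y → ∃ ω : Ultrafilter G, D (T ω x) (T ω y) < D x y)
    (hattain : ∀ x y : Z, ∃ ω : Ultrafilter G, ∀ ν : Ultrafilter G,
      D x y - D (T ν x) (T ν y) ≤ D x y - D (T ω x) (T ω y)) :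
    ∀ x y : Z, ∃ ω : Ultrafilter G, T ω x = T ω y := by
  intro x y
  obtain ⟨ω, hωmax⟩ := hattain x y
  refine ⟨ω, by_contra fun hne => ?_⟩
  obtain ⟨ν, hν⟩ := hcomp _ _ hne
  have hνω := hωmax (ν * ω)
  rw [ultrafilterLimit_mul hcont T hT, ultrafilterLimit_mul hcont T hT] at hνω
  linarith

/-- Let `Z` be a compact Hausdorff space with a discrete group `G` acting
by homeomorphisms, and let `T ω` be the ultrafilter-limit operators (`T ω z` is the
`ω`-limit of `g ↦ g • z`).  Suppose `D : Z × Z → [0,∞)` satisfies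
`D (T ω x) (T ω y) ≤ D x y` for all `ω, x, y`, that no pair of distinct points is
incompressible (for all `x ≠ y` there is `ω` with `D (T ω x) (T ω y) < D x y`), and that
the `G`-compression `sup_ω (D x y − D (T ω x) (T ω y))` is attained for every pair.
Then every pair of points is proximal: for all `x y` there is `ω` with `T ω x = T ω y`. -/
theorem all_pairs_proximal_of_no_incompressible_pair {G Z : Type*} [Group G]
    [TopologicalSpace Z] [CompactSpace Z] [T2Space Z] [MulAction G Z]
    (hcont : ∀ g : G, Continuous fun z : Z => g • z)
    (T : Ultrafilter G → Z → Z)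
    (hT : ∀ (ω : Ultrafilter G) (z : Z), Tendsto (fun g : G => g • z) ω (𝓝 (T ω z)))
    (D : Z → Z → ℝ) (hDnonneg : ∀ x y, 0 ≤ D x y)
    (hmono : ∀ (ω : Ultrafilter G) (x y : Z), D (T ω x) (T ω y) ≤ D x y)
    (hcomp : ∀ x y : Z, x ≠ y → ∃ ω : Ultrafilter G, D (T ω x) (T ω y) < D x y)
    (hattain : ∀ x y : Z, ∃ ω : Ultrafilter G, ∀ ν : Ultrafilter G,
      D x y - D (T ν x) (T ν y) ≤ D x y - D (T ω x) (T ω y)) :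
    ∀ x y : Z, ∃ ω : Ultrafilter G, T ω x = T ω y :=
  all_pairs_proximal_of_no_incompressible_pair_general hcont T hT D hcomp hattain
end
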